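/- arXiv:2005.02949 — 12 statements merged into one kernel-verified Lean document; each statement's English description precedes it below -/
import Mathlib

section
/- Let X and Y be real normed spaces and let f : X → Y be a surjective map satisfying the phase-isometry condition. Then f preserves norms (‖f(x)‖ = ‖x‖ for all x ∈ X), f is injective, and f is odd (f(−x) = −f(x) for all x ∈ X). -/
/-- The phase-isometry condition: `{‖f x + f y‖, ‖f x − f y‖} = {‖x + y‖, ‖x − y‖}` as sets. -/
def PhaseIsometry {X Y : Type*} [NormedAddCommGroup X] [NormedAddCommGroup Y]
    (f : X → Y) : Prop :=
  ∀ x y : X, ({‖f x + f y‖, ‖f x - f y‖} : Set ℝ) = {‖x + y‖, ‖x - y‖}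

theorem phase_isometry_norm_preserving_injective_odd
    {X Y : Type*} [NormedAddCommGroup X] [NormedSpace ℝ X]
    [NormedAddCommGroup Y] [NormedSpace ℝ Y]
    (f : X → Y) (hsurj : Function.Surjective f) (hf : PhaseIsometry f) :
    (∀ x : X, ‖f x‖ = ‖x‖) ∧ Function.Injective f ∧ (∀ x : X, f (-x) = -f x) := by
  -- a helper: in a real normed space, a + a = 0 → a = 0
  have half : ∀ {a : Y}, a + a = 0 → a = 0 := by
    intro a ha
    have h2 : (2:ℝ) • a = 0 := by rw [two_smul]; exact ha
    rcases smul_eq_zero.mp h2 with h | h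
    · norm_num at h
    · exact h
  have halfX : ∀ {a : X}, a + a = 0 → a = 0 := by
    intro a ha
    have h2 : (2:ℝ) • a = 0 := by rw [two_smul]; exact ha
    rcases smul_eq_zero.mp h2 with h | h
    · norm_num at h
    · exact h
  have h0 : f 0 = 0 := by
    have h := hf 0 0
    rw [Set.pair_eq_pair_iff] at h
    simp only [add_zero, norm_zero, norm_eq_zero, sub_self, and_true, or_self] at h
    exact half h
  have hnorm : ∀ x : X, ‖f x‖ = ‖x‖ := by
    intro x
    have h := hf x 0
    rw [h0, Set.pair_eq_pair_iff] at h
    simp only [add_zero, sub_zero] at h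
    tauto
  have hodd : ∀ x : X, f (-x) = -f x := by
    intro x
    by_cases hx : f x = 0
    · have hxz : x = 0 := by
        have := hnorm x; rw [hx] at this; simpa using this.symm
      rw [hxz, neg_zero, h0, neg_zero]
    have h := hf x (-x)
    rw [Set.pair_eq_pair_iff] at h
    simp only [add_neg_cancel, norm_zero, norm_eq_zero] at h
    rcases h with h | h
    · exact eq_neg_of_add_eq_zero_right h.1
    · exfalso
      have heq : f (-x) = f x := (sub_eq_zero.mp h.2).symm
      obtain ⟨u, hu⟩ := hsurj (-f x)
      have h2 := hf x u
      rw [hu, Set.pair_eq_pair_iff] at h2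
      simp only [add_neg_cancel, norm_zero, sub_neg_eq_add] at h2
      rcases h2 with h2 | h2
      · -- 0 = ‖x + u‖, so u = -x
        have hux : u = -x := by
          have : x + u = 0 := norm_eq_zero.mp h2.1.symm
          exact eq_neg_of_add_eq_zero_right this
        rw [hux, heq] at hu
        exact hx (half (by nth_rewrite 2 [hu]; simp))
      · -- 0 = ‖x - u‖, so u = x
        have hux : u = x := by
          have : x - u = 0 := norm_eq_zero.mp h2.1.symm
          exact (sub_eq_zero.mp this).symm
        rw [hux] at hu
        have hfx : f x = -f x := by rw [← hu]
        exact hx (half (by nth_rewrite 2 [hfx]; simp))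
  refine ⟨hnorm, ?_, hodd⟩
  intro a b hab
  have h := hf a b
  rw [← hab, Set.pair_eq_pair_iff] at h
  simp only [sub_self, norm_zero, norm_eq_zero] at h
  rcases h with h | h
  · -- 0 = ‖a - b‖
    have : a - b = 0 := norm_eq_zero.mp h.2.symm
    exact sub_eq_zero.mp this
  · -- 0 = ‖a + b‖ → b = -a
    have hba : a + b = 0 := norm_eq_zero.mp h.2.symm
    have hb : b = -a := eq_neg_of_add_eq_zero_right hba
    have : f a = -f a := by conv_lhs => rw [hab, hb, hodd a]
    have hfa : f a = 0 := half (by nth_rewrite 2 [this]; simp)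
    have ha0 : a = 0 := by
      have := hnorm a; rw [hfa] at this; simpa using this.symm
    rw [ha0] at hb ⊢; simpa using hb.symm
end

section
/- Let X and Y be real normed spaces and let f : X → Y be a surjective map satisfying the phase-isometry condition. If {x_n} is a sequence in X converging to x ∈ X, then there is a subsequence {x_{n_i}} such that the sequence {f(x_{n_i})} converges to f(x) or to −f(x). -/
theorem phase_isometry_subsequence_convergence
    {X Y : Type*} [NormedAddCommGroup X] [NormedSpace ℝ X]
    [NormedAddCommGroup Y] [NormedSpace ℝ Y]
    (f : X → Y) (hsurj : Function.Surjective f) (hf : PhaseIsometry f)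
    (u : ℕ → X) (x : X) (hu : Filter.Tendsto u Filter.atTop (nhds x)) :
    ∃ φ : ℕ → ℕ, StrictMono φ ∧
      (Filter.Tendsto (fun i => f (u (φ i))) Filter.atTop (nhds (f x)) ∨
       Filter.Tendsto (fun i => f (u (φ i))) Filter.atTop (nhds (-f x))) := by
  have key : ∀ n, ‖f (u n) - f x‖ ≤ ‖u n - x‖ ∨ ‖f (u n) + f x‖ ≤ ‖u n - x‖ := by
    intro n
    have h := hf (u n) x
    have hmem : (‖u n - x‖ : ℝ) ∈ ({‖f (u n) + f x‖, ‖f (u n) - f x‖} : Set ℝ) := by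
      rw [h]; exact Or.inr rfl
    rcases hmem with h1 | h2
    · exact Or.inr (le_of_eq h1.symm)
    · exact Or.inl (le_of_eq h2.symm)
  have hnorm : Filter.Tendsto (fun n => ‖u n - x‖) Filter.atTop (nhds 0) :=
    tendsto_iff_norm_sub_tendsto_zero.mp hu
  by_cases hfreq : ∃ᶠ n in Filter.atTop, ‖f (u n) - f x‖ ≤ ‖u n - x‖
  · obtain ⟨φ, hmono, hφ⟩ := Filter.extraction_of_frequently_atTop hfreq
    refine ⟨φ, hmono, Or.inl ?_⟩
    rw [tendsto_iff_norm_sub_tendsto_zero]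
    exact squeeze_zero (fun i => norm_nonneg _) (fun i => hφ i)
      (hnorm.comp hmono.tendsto_atTop)
  · have hev : ∀ᶠ n in Filter.atTop, ¬ ‖f (u n) - f x‖ ≤ ‖u n - x‖ :=
      Filter.not_frequently.mp hfreq
    have hfreq2 : ∃ᶠ n in Filter.atTop, ‖f (u n) + f x‖ ≤ ‖u n - x‖ :=
      (hev.mono fun n hn => (key n).resolve_left hn).frequently
    obtain ⟨φ, hmono, hφ⟩ := Filter.extraction_of_frequently_atTop hfreq2
    refine ⟨φ, hmono, Or.inr ?_⟩
    rw [tendsto_iff_norm_sub_tendsto_zero]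
    refine squeeze_zero (fun i => norm_nonneg _) (fun i => ?_)
      (hnorm.comp hmono.tendsto_atTop)
    simpa [sub_neg_eq_add] using hφ i
end

section
/- Let X and Y be real normed spaces and let f : X → Y be a surjective map satisfying the phase-isometry condition. If x, y ∈ X satisfy ‖x−y‖ < ‖x+y‖ and ‖f(x)−f(y)‖ = ‖x−y‖, then the image f(H_{x,y} ∪ H_{−x,−y}) equals H_{f(x),f(y)} ∪ H_{−f(x),−f(y)}. -/
/-- `Hset x y = {u : ‖u − x‖ = ‖u − y‖ = (1/2)‖x − y‖}`. -/
def Hset {S : Type*} [NormedAddCommGroup S] (x y : S) : Set S :=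
  {u : S | ‖u - x‖ = ‖x - y‖ / 2 ∧ ‖u - y‖ = ‖x - y‖ / 2}

private lemma transfer' {A B C D d2 : ℝ} (h : A = C ∧ B = D ∨ A = D ∧ B = C)
    (hc : C = d2 ∨ D = d2) : A = d2 ∨ B = d2 := by
  rcases h with ⟨h1, h2⟩ | ⟨h1, h2⟩ <;> rcases hc with hc | hc <;>
    first | (left; linarith) | (right; linarith)

private lemma endgame' {S : Type*} [NormedAddCommGroup S] {u a b : S} {d s : ℝ}
    (hd : ‖a - b‖ = d) (hs : ‖a + b‖ = s) (hds : d < s)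
    (hX : ‖u - a‖ = d / 2 ∨ ‖u + a‖ = d / 2)
    (hY : ‖u - b‖ = d / 2 ∨ ‖u + b‖ = d / 2) :
    u ∈ Hset a b ∪ Hset (-a) (-b) := by
  have key : ∀ p q : S, ‖p + q‖ ≤ ‖u + q‖ + ‖u - p‖ := by
    intro p q
    have h := norm_sub_le (u + q) (u - p)
    have e : (u + q) - (u - p) = p + q := by abel
    rw [e] at h; exact h
  rcases hX with hX | hX <;> rcases hY with hY | hY
  · exact Or.inl ⟨by rw [hd]; exact hX, by rw [hd]; exact hY⟩
  · exfalso
    have := key a b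
    rw [hs, hY, hX] at this; linarith
  · exfalso
    have := key b a
    rw [show b + a = a + b by abel, hs, hX, hY] at this; linarith
  · refine Or.inr ⟨?_, ?_⟩
    · rw [sub_neg_eq_add, show (-a - -b) = -(a - b) by abel, norm_neg, hd]; exact hX
    · rw [sub_neg_eq_add, show (-a - -b) = -(a - b) by abel, norm_neg, hd]; exact hY

theorem phase_isometry_image_Hset_same_sign
    {X Y : Type*} [NormedAddCommGroup X] [NormedSpace ℝ X]
    [NormedAddCommGroup Y] [NormedSpace ℝ Y]
    (f : X → Y) (hsurj : Function.Surjective f) (hf : PhaseIsometry f)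
    (x y : X) (hlt : ‖x - y‖ < ‖x + y‖) (heq : ‖f x - f y‖ = ‖x - y‖) :
    f '' (Hset x y ∪ Hset (-x) (-y)) = Hset (f x) (f y) ∪ Hset (-f x) (-f y) := by
  have hneg : ∀ a b : X, ‖(-a : X) - -b‖ = ‖a - b‖ := by
    intro a b; rw [show (-a - -b) = -(a - b) by abel, norm_neg]
  have hnegY : ∀ a b : Y, ‖(-a : Y) - -b‖ = ‖a - b‖ := by
    intro a b; rw [show (-a - -b) = -(a - b) by abel, norm_neg]
  have hs : ‖f x + f y‖ = ‖x + y‖ := by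
    rcases Set.pair_eq_pair_iff.mp (hf x y) with ⟨h1, h2⟩ | ⟨h1, h2⟩
    · exact h1
    · linarith
  ext v
  constructor
  · rintro ⟨u, hu, rfl⟩
    have hX0 : ‖u + x‖ = ‖x - y‖ / 2 ∨ ‖u - x‖ = ‖x - y‖ / 2 := by
      rcases hu with ⟨h1, h2⟩ | ⟨h1, h2⟩
      · exact Or.inr h1
      · left
        rw [hneg] at h1
        rw [← sub_neg_eq_add u x]; exact h1
    have hY0 : ‖u + y‖ = ‖x - y‖ / 2 ∨ ‖u - y‖ = ‖x - y‖ / 2 := by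
      rcases hu with ⟨h1, h2⟩ | ⟨h1, h2⟩
      · exact Or.inr h2
      · left
        rw [hneg] at h2
        rw [← sub_neg_eq_add u y]; exact h2
    have hX := transfer' (Set.pair_eq_pair_iff.mp (hf u x)) hX0
    have hY := transfer' (Set.pair_eq_pair_iff.mp (hf u y)) hY0
    exact endgame' heq hs hlt hX.symm hY.symm
  · intro hv
    obtain ⟨u, rfl⟩ := hsurj v
    have hA : ‖f u + f x‖ = ‖x - y‖ / 2 ∨ ‖f u - f x‖ = ‖x - y‖ / 2 := by
      rcases hv with ⟨h1, h2⟩ | ⟨h1, h2⟩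
      · right; rw [← heq]; exact h1
      · left
        rw [hnegY, heq] at h1
        rw [← sub_neg_eq_add (f u) (f x)]; exact h1
    have hB : ‖f u + f y‖ = ‖x - y‖ / 2 ∨ ‖f u - f y‖ = ‖x - y‖ / 2 := by
      rcases hv with ⟨h1, h2⟩ | ⟨h1, h2⟩
      · right; rw [← heq]; exact h2
      · left
        rw [hnegY, heq] at h2
        rw [← sub_neg_eq_add (f u) (f y)]; exact h2
    have hpairx : ‖u + x‖ = ‖f u + f x‖ ∧ ‖u - x‖ = ‖f u - f x‖ ∨
        ‖u + x‖ = ‖f u - f x‖ ∧ ‖u - x‖ = ‖f u + f x‖ := by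
      rcases Set.pair_eq_pair_iff.mp (hf u x) with ⟨h1, h2⟩ | ⟨h1, h2⟩
      · exact Or.inl ⟨h1.symm, h2.symm⟩
      · exact Or.inr ⟨h2.symm, h1.symm⟩
    have hpairy : ‖u + y‖ = ‖f u + f y‖ ∧ ‖u - y‖ = ‖f u - f y‖ ∨
        ‖u + y‖ = ‖f u - f y‖ ∧ ‖u - y‖ = ‖f u + f y‖ := by
      rcases Set.pair_eq_pair_iff.mp (hf u y) with ⟨h1, h2⟩ | ⟨h1, h2⟩
      · exact Or.inl ⟨h1.symm, h2.symm⟩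
      · exact Or.inr ⟨h2.symm, h1.symm⟩
    have hX0 := transfer' hpairx hA
    have hY0 := transfer' hpairy hB
    exact ⟨u, endgame' rfl rfl hlt hX0.symm hY0.symm, rfl⟩
end

section
/- Let X and Y be real normed spaces and let f : X → Y be a surjective map satisfying the phase-isometry condition. If x, y ∈ X satisfy ‖x−y‖ < ‖x+y‖ and ‖f(x)−f(y)‖ = ‖x+y‖, then the image f(H_{x,y} ∪ H_{−x,−y}) equals H_{−f(x),f(y)} ∪ H_{f(x),−f(y)}. -/
private lemma pair4 {a b c d : ℝ} (h : ({a, b} : Set ℝ) = {c, d}) :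
    (a = c ∨ a = d) ∧ (b = c ∨ b = d) ∧ (c = a ∨ c = b) ∧ (d = a ∨ d = b) := by
  rw [Set.ext_iff] at h
  simp only [Set.mem_insert_iff, Set.mem_singleton_iff] at h
  exact ⟨(h a).1 (Or.inl rfl), (h b).1 (Or.inr rfl), (h c).2 (Or.inl rfl),
    (h d).2 (Or.inr rfl)⟩

private lemma key {S : Type*} [NormedAddCommGroup S] {a b c : S} {A B : ℝ}
    (hA : ‖a - b‖ = A) (hB : ‖a + b‖ = B) (hlt : A < B)
    (h1 : ‖c - a‖ = A / 2 ∨ ‖c + a‖ = A / 2)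
    (h2 : ‖c - b‖ = A / 2 ∨ ‖c + b‖ = A / 2) :
    c ∈ Hset a b ∪ Hset (-a) (-b) := by
  rcases h1 with h1 | h1 <;> rcases h2 with h2 | h2
  · exact Or.inl ⟨by rw [hA, h1], by rw [hA, h2]⟩
  · exfalso
    have e : a + b = (c + b) - (c - a) := by abel
    have t := norm_sub_le (c + b) (c - a)
    rw [← e, hB, h1, h2] at t
    linarith
  · exfalso
    have e : a + b = (c + a) - (c - b) := by abel
    have t := norm_sub_le (c + a) (c - b)
    rw [← e, hB, h1, h2] at t
    linarith
  · right
    have eab : ‖(-a) - (-b)‖ = A := by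
      rw [show (-a) - (-b) = -(a - b) by abel, norm_neg, hA]
    exact ⟨by rw [eab, show c - -a = c + a by abel, h1],
      by rw [eab, show c - -b = c + b by abel, h2]⟩

theorem phase_isometry_image_Hset_opposite_sign
    {X Y : Type*} [NormedAddCommGroup X] [NormedSpace ℝ X]
    [NormedAddCommGroup Y] [NormedSpace ℝ Y]
    (f : X → Y) (hsurj : Function.Surjective f) (hf : PhaseIsometry f)
    (x y : X) (hlt : ‖x - y‖ < ‖x + y‖) (heq : ‖f x - f y‖ = ‖x + y‖) :
    f '' (Hset x y ∪ Hset (-x) (-y)) = Hset (-f x) (f y) ∪ Hset (f x) (-f y) := by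
  -- abbreviations
  have hsum : ‖f x + f y‖ = ‖x - y‖ := by
    rcases (pair4 (hf x y)).2.2.2 with h | h
    · exact h.symm
    · rw [heq] at h; exact absurd h (ne_of_lt hlt)
  have hA1 : ‖(-f x) - f y‖ = ‖x - y‖ := by
    rw [show (-f x) - f y = -(f x + f y) by abel, norm_neg, hsum]
  have hA2 : ‖f x - (-f y)‖ = ‖x - y‖ := by
    rw [show f x - (-f y) = f x + f y by abel, hsum]
  ext v
  constructor
  · rintro ⟨u, hu, rfl⟩
    -- from hu, get that A/2 equals one of ‖f u ± f x‖ and one of ‖f u ± f y‖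
    have h1 : ‖f u + f x‖ = ‖x - y‖ / 2 ∨ ‖f u - f x‖ = ‖x - y‖ / 2 := by
      rcases hu with hu | hu
      · rcases (pair4 (hf u x)).2.2.2 with h | h
        · exact Or.inl (h.symm.trans hu.1)
        · exact Or.inr (h.symm.trans hu.1)
      · have hux : ‖u + x‖ = ‖x - y‖ / 2 := by
          have := hu.1
          rw [show u - -x = u + x by abel,
            show (-x) - (-y) = -(x - y) by abel, norm_neg] at this
          exact this
        rcases (pair4 (hf u x)).2.2.1 with h | h
        · exact Or.inl (h.symm.trans hux)
        · exact Or.inr (h.symm.trans hux)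
    have h2 : ‖f u - f y‖ = ‖x - y‖ / 2 ∨ ‖f u + f y‖ = ‖x - y‖ / 2 := by
      rcases hu with hu | hu
      · rcases (pair4 (hf u y)).2.2.2 with h | h
        · exact Or.inr (h.symm.trans hu.2)
        · exact Or.inl (h.symm.trans hu.2)
      · have huy : ‖u + y‖ = ‖x - y‖ / 2 := by
          have := hu.2
          rw [show u - -y = u + y by abel,
            show (-x) - (-y) = -(x - y) by abel, norm_neg] at this
          exact this
        rcases (pair4 (hf u y)).2.2.1 with h | h
        · exact Or.inr (h.symm.trans huy)
        · exact Or.inl (h.symm.trans huy)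
    have hB' : ‖(-f x) + f y‖ = ‖x + y‖ := by
      rw [show (-f x) + f y = -(f x - f y) by abel, norm_neg, heq]
    have h1' : ‖f u - (-f x)‖ = ‖x - y‖ / 2 ∨ ‖f u + (-f x)‖ = ‖x - y‖ / 2 := by
      rcases h1 with h | h
      · exact Or.inl (by rw [show f u - -f x = f u + f x by abel, h])
      · exact Or.inr (by rw [show f u + -f x = f u - f x by abel, h])
    have := key hA1 hB' hlt h1' h2
    simpa using this
  · intro hv
    obtain ⟨u, rfl⟩ := hsurj v
    refine ⟨u, ?_, rfl⟩
    have h12 : (‖f u + f x‖ = ‖x - y‖ / 2 ∧ ‖f u - f y‖ = ‖x - y‖ / 2) ∨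
        (‖f u - f x‖ = ‖x - y‖ / 2 ∧ ‖f u + f y‖ = ‖x - y‖ / 2) := by
      rcases hv with hv | hv
      · left
        refine ⟨?_, ?_⟩
        · have := hv.1
          rw [show f u - -f x = f u + f x by abel, hA1] at this
          exact this
        · have := hv.2
          rw [hA1] at this
          exact this
      · right
        refine ⟨?_, ?_⟩
        · have := hv.1
          rw [hA2] at this
          exact this
        · have := hv.2
          rw [show f u - -f y = f u + f y by abel, hA2] at this
          exact this
    have h1 : ‖u - x‖ = ‖x - y‖ / 2 ∨ ‖u + x‖ = ‖x - y‖ / 2 := by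
      rcases h12 with ⟨h, _⟩ | ⟨h, _⟩
      · rcases (pair4 (hf u x)).1 with h' | h'
        · exact Or.inr (h' ▸ h)
        · exact Or.inl (h' ▸ h)
      · rcases (pair4 (hf u x)).2.1 with h' | h'
        · exact Or.inr (h' ▸ h)
        · exact Or.inl (h' ▸ h)
    have h2 : ‖u - y‖ = ‖x - y‖ / 2 ∨ ‖u + y‖ = ‖x - y‖ / 2 := by
      rcases h12 with ⟨_, h⟩ | ⟨_, h⟩
      · rcases (pair4 (hf u y)).2.1 with h' | h'
        · exact Or.inr (h' ▸ h)
        · exact Or.inl (h' ▸ h)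
      · rcases (pair4 (hf u y)).1 with h' | h'
        · exact Or.inr (h' ▸ h)
        · exact Or.inl (h' ▸ h)
    exact key rfl rfl hlt h1 h2
end

section
/- Let X and Y be real normed spaces and let f : X → Y be a surjective map satisfying the phase-isometry condition. Then for every x ∈ X, the image f(H_{x,0} ∪ H_{−x,0}) equals H_{f(x),0} ∪ H_{−f(x),0}. -/
lemma phase_isometry_norm_eq {X Y : Type*} [NormedAddCommGroup X] [NormedSpace ℝ X]
    [NormedAddCommGroup Y] [NormedSpace ℝ Y] {f : X → Y} (hf : PhaseIsometry f) (z : X) :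
    ‖f z‖ = ‖z‖ := by
  have h := hf z z
  have h1 : ‖f z + f z‖ ∈ ({‖z + z‖, ‖z - z‖} : Set ℝ) := h ▸ Set.mem_insert _ _
  have h2 : ‖z + z‖ ∈ ({‖f z + f z‖, ‖f z - f z‖} : Set ℝ) := h.symm ▸ Set.mem_insert _ _
  have e1 : ‖f z + f z‖ = 2 * ‖f z‖ := by
    rw [← two_smul ℝ, norm_smul]; simp
  have e2 : ‖z + z‖ = 2 * ‖z‖ := by
    rw [← two_smul ℝ, norm_smul]; simp
  simp only [sub_self, norm_zero, Set.mem_insert_iff, Set.mem_singleton_iff] at h1 h2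
  rcases h1 with h1 | h1
  · linarith
  · rcases h2 with h2 | h2 <;> linarith

theorem phase_isometry_image_Hset_zero
    {X Y : Type*} [NormedAddCommGroup X] [NormedSpace ℝ X]
    [NormedAddCommGroup Y] [NormedSpace ℝ Y]
    (f : X → Y) (hsurj : Function.Surjective f) (hf : PhaseIsometry f)
    (x : X) :
    f '' (Hset x 0 ∪ Hset (-x) 0) = Hset (f x) 0 ∪ Hset (-f x) 0 := by
  have hfx : ‖f x‖ = ‖x‖ := phase_isometry_norm_eq hf x
  ext v
  simp only [Set.mem_image, Set.mem_union, Hset, Set.mem_setOf_eq, sub_zero, norm_neg,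
    sub_neg_eq_add, hfx]
  constructor
  · rintro ⟨u, hu, rfl⟩
    have hfu : ‖f u‖ = ‖u‖ := phase_isometry_norm_eq hf u
    have hnu : ‖u‖ = ‖x‖ / 2 := by rcases hu with ⟨_, h⟩ | ⟨_, h⟩ <;> exact h
    have hmem : (‖x‖ / 2 : ℝ) ∈ ({‖u + x‖, ‖u - x‖} : Set ℝ) := by
      rcases hu with ⟨h, _⟩ | ⟨h, _⟩
      · exact Set.mem_insert_iff.mpr (Or.inr (Set.mem_singleton_iff.mpr h.symm))
      · exact Set.mem_insert_iff.mpr (Or.inl h.symm)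
    have hmem' : (‖x‖ / 2 : ℝ) ∈ ({‖f u + f x‖, ‖f u - f x‖} : Set ℝ) := (hf u x) ▸ hmem
    simp only [Set.mem_insert_iff, Set.mem_singleton_iff] at hmem'
    rcases hmem' with h | h
    · exact Or.inr ⟨h.symm, by rw [hfu, hnu]⟩
    · exact Or.inl ⟨h.symm, by rw [hfu, hnu]⟩
  · rintro hv
    obtain ⟨u, rfl⟩ := hsurj v
    have hfu : ‖f u‖ = ‖u‖ := phase_isometry_norm_eq hf u
    have hnu : ‖u‖ = ‖x‖ / 2 := by
      rcases hv with ⟨_, h⟩ | ⟨_, h⟩ <;> rw [← hfu, h]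
    have hmem : (‖x‖ / 2 : ℝ) ∈ ({‖f u + f x‖, ‖f u - f x‖} : Set ℝ) := by
      rcases hv with ⟨h, _⟩ | ⟨h, _⟩
      · exact Set.mem_insert_iff.mpr (Or.inr (Set.mem_singleton_iff.mpr h.symm))
      · exact Set.mem_insert_iff.mpr (Or.inl h.symm)
    have hmem' : (‖x‖ / 2 : ℝ) ∈ ({‖u + x‖, ‖u - x‖} : Set ℝ) := (hf u x) ▸ hmem
    simp only [Set.mem_insert_iff, Set.mem_singleton_iff] at hmem'
    refine ⟨u, ?_, rfl⟩
    rcases hmem' with h | h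
    · exact Or.inr ⟨h.symm, hnu⟩
    · exact Or.inl ⟨h.symm, hnu⟩
end

section
/- Let X be a real normed space and let x, y ∈ X be such that ‖u+v‖ ≥ ‖u−v‖ for all u, v ∈ H_{x,y}. Let z = (1/2)(x+y). Then z and −z belong to G_n for every n ≥ 1; consequently, if the diameters d_n tend to 0 and hence the intersection ∩_{n≥1} G_n contains at most the pair {z, −z} and its negatives, this intersection equals {z, −z}. -/
/-- For a set `S`, `dSet S = sup { min{‖u − v‖, ‖u + v‖} : u, v ∈ S }`. -/
noncomputable def dSet {X : Type*} [NormedAddCommGroup X] (S : Set X) : ℝ :=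
  sSup ((fun p : X × X => min ‖p.1 - p.2‖ ‖p.1 + p.2‖) '' (S ×ˢ S))

/-- The nested sequence of sets from the paper:
`G x y 0 = H_{x,y} ∪ H_{−x,−y}` (the paper's `G_1`) and
`G x y (n+1) = {u ∈ G x y n : min{‖u − v‖, ‖u + v‖} ≤ d_n / 2 for all v ∈ G x y n}`. -/
noncomputable def G {X : Type*} [NormedAddCommGroup X] (x y : X) : ℕ → Set X
  | 0 => Hset x y ∪ Hset (-x) (-y)
  | n + 1 =>
      {u ∈ G x y n | ∀ v ∈ G x y n, min ‖u - v‖ ‖u + v‖ ≤ dSet (G x y n) / 2}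

/-
On `H_{x,y}` the hypothesis turns `min{‖u − v‖, ‖u + v‖}` into the plain distance `‖u − v‖`.
Every `G_n` is invariant under `u ↦ −u`, and its part in `H_{x,y}` under the point reflection
`u ↦ x + y − u` about `z`; the invariance passes to `G_{n+1}` because a point whose
`min{‖u − v‖, ‖u + v‖}`-distances are dominated by those of a point of `G_{n+1}` lies in `G_{n+1}`.
Given `v ∈ G_n`, replace it by whichever of `±v` lies in `H_{x,y}`; then
`‖z − v‖ = ½‖v − (x + y − v)‖ ≤ d_n / 2`, so `z` survives every step.
Finally `d_n → 0`, so any two points of `⋂ G_n` agree up to sign.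
-/

open Bornology Filter Topology

section CentralPart

variable {X : Type*} [NormedAddCommGroup X]

def centralPart (S : Set X) : Set X :=
  {u ∈ S | ∀ v ∈ S, min ‖u - v‖ ‖u + v‖ ≤ dSet S / 2}

theorem G_succ (x y : X) (n : ℕ) : G x y (n + 1) = centralPart (G x y n) := rfl

theorem centralPart_subset (S : Set X) : centralPart S ⊆ S := fun _ hu => hu.1

theorem G_antitone (x y : X) : Antitone (G x y) :=
  antitone_nat_of_succ_le fun n => centralPart_subset (G x y n)

theorem min_norm_sub_norm_add_neg_left (u v : X) :
    min ‖-u - v‖ ‖-u + v‖ = min ‖u - v‖ ‖u + v‖ := by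
  rw [← norm_neg (-u - v), ← norm_neg (-u + v), min_comm]
  congr 2 <;> abel

theorem min_norm_sub_norm_add_neg_right (u v : X) :
    min ‖u - -v‖ ‖u + -v‖ = min ‖u - v‖ ‖u + v‖ := by
  rw [sub_neg_eq_add, ← sub_eq_add_neg, min_comm]

theorem dSet_nonneg (S : Set X) : 0 ≤ dSet S :=
  Real.sSup_nonneg (by rintro _ ⟨p, -, rfl⟩; positivity)

theorem min_le_dSet {S : Set X} (hS : IsBounded S) {u v : X} (hu : u ∈ S) (hv : v ∈ S) :
    min ‖u - v‖ ‖u + v‖ ≤ dSet S := by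
  obtain ⟨C, hC⟩ := isBounded_iff_forall_norm_le.1 hS
  refine le_csSup ⟨2 * C, ?_⟩ ⟨(u, v), ⟨hu, hv⟩, rfl⟩
  rintro _ ⟨⟨a, b⟩, ⟨ha, hb⟩, rfl⟩
  linarith [min_le_left ‖a - b‖ ‖a + b‖, norm_sub_le a b, hC a ha, hC b hb]

theorem dSet_centralPart_le (S : Set X) : dSet (centralPart S) ≤ dSet S / 2 :=
  Real.sSup_le (by rintro _ ⟨⟨u, v⟩, ⟨hu, hv⟩, rfl⟩; exact hu.2 v hv.1)
    (by linarith [dSet_nonneg S])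

theorem mem_centralPart_of_dominated {S : Set X} {u u' : X} (hu : u ∈ centralPart S)
    (hu' : u' ∈ S)
    (hdom : ∀ v ∈ S, ∃ w ∈ S, min ‖u' - v‖ ‖u' + v‖ ≤ min ‖u - w‖ ‖u + w‖) :
    u' ∈ centralPart S := by
  refine ⟨hu', fun v hv => ?_⟩
  obtain ⟨w, hw, hle⟩ := hdom v hv
  exact hle.trans (hu.2 w hw)

theorem neg_mem_centralPart {S : Set X} (hneg : ∀ u ∈ S, -u ∈ S) {u : X}
    (hu : u ∈ centralPart S) : -u ∈ centralPart S :=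
  mem_centralPart_of_dominated hu (hneg u hu.1) fun v hv =>
    ⟨v, hv, (min_norm_sub_norm_add_neg_left u v).le⟩

theorem tendsto_dSet_iterate_centralPart {S : ℕ → Set X}
    (hS : ∀ n, S (n + 1) = centralPart (S n)) :
    Tendsto (fun n => dSet (S n)) atTop (𝓝 0) := by
  have hle : ∀ n, dSet (S n) ≤ dSet (S 0) * (1 / 2) ^ n := by
    intro n
    induction n with
    | zero => simp
    | succ n ih =>
      rw [hS, pow_succ]
      linarith [dSet_centralPart_le (S n)]
  have hgeom := (tendsto_pow_atTop_nhds_zero_of_lt_one (r := (1 / 2 : ℝ)) (by norm_num)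
    (by norm_num)).const_mul (dSet (S 0))
  rw [mul_zero] at hgeom
  exact squeeze_zero (fun n => dSet_nonneg _) hle hgeom

theorem eq_or_eq_neg_of_mem_iInter_iterate_centralPart {S : ℕ → Set X}
    (hS : ∀ n, S (n + 1) = centralPart (S n)) {u z : X} (hu : u ∈ ⋂ n, S n)
    (hz : z ∈ ⋂ n, S n) : u = z ∨ u = -z := by
  rw [Set.mem_iInter] at hu hz
  have hbound : ∀ n, min ‖u - z‖ ‖u + z‖ ≤ dSet (S n) := fun n => by
    have hun : u ∈ centralPart (S n) := hS n ▸ hu (n + 1)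
    linarith [hun.2 z (hz n), dSet_nonneg (S n)]
  rcases min_le_iff.1 (ge_of_tendsto' (tendsto_dSet_iterate_centralPart hS) hbound) with h | h
  · exact Or.inl (sub_eq_zero.1 (norm_le_zero_iff.1 h))
  · exact Or.inr (eq_neg_of_add_eq_zero_left (norm_le_zero_iff.1 h))

end CentralPart

section Reflection

variable {X : Type*} [NormedAddCommGroup X] {x y : X}

theorem neg_mem_Hset_neg_iff {u : X} : -u ∈ Hset (-x) (-y) ↔ u ∈ Hset x y := by
  simp only [Hset, Set.mem_ofPred_eq, ← neg_sub', norm_neg]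

theorem sub_mem_Hset {u : X} (hu : u ∈ Hset x y) : x + y - u ∈ Hset x y := by
  obtain ⟨hux, huy⟩ := hu
  constructor
  · rw [show x + y - u - x = -(u - y) by abel, norm_neg, huy]
  · rw [show x + y - u - y = -(u - x) by abel, norm_neg, hux]

theorem midpoint_mem_Hset [NormedSpace ℝ X] (x y : X) :
    ((1 : ℝ) / 2) • (x + y) ∈ Hset x y := by
  constructor
  · rw [show ((1 : ℝ) / 2) • (x + y) - x = ((1 : ℝ) / 2) • -(x - y) by module, norm_smul,
      norm_neg]
    norm_num
    ring
  · rw [show ((1 : ℝ) / 2) • (x + y) - y = ((1 : ℝ) / 2) • (x - y) by module, norm_smul]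
    norm_num
    ring

theorem isBounded_Hset (x y : X) : IsBounded (Hset x y) :=
  (Metric.isBounded_closedBall (x := x) (r := ‖x - y‖ / 2)).subset fun u hu => by
    rw [Metric.mem_closedBall, dist_eq_norm, hu.1]

theorem isBounded_G_zero (x y : X) : IsBounded (G x y 0) :=
  (isBounded_Hset x y).union (isBounded_Hset (-x) (-y))

theorem neg_mem_G_zero {u : X} (hu : u ∈ G x y 0) : -u ∈ G x y 0 := by
  rcases hu with hu | hu
  · exact Or.inr (neg_mem_Hset_neg_iff.2 hu)
  · exact Or.inl (neg_mem_Hset_neg_iff.1 (by rwa [neg_neg]))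

theorem exists_mem_Hset_min_eq {S : Set X} (hS0 : S ⊆ G x y 0) (hneg : ∀ u ∈ S, -u ∈ S)
    {v : X} (hv : v ∈ S) :
    ∃ v' ∈ S, v' ∈ Hset x y ∧ ∀ a : X, min ‖a - v‖ ‖a + v‖ = min ‖a - v'‖ ‖a + v'‖ := by
  rcases hS0 hv with hvH | hvH
  · exact ⟨v, hv, hvH, fun a => rfl⟩
  · exact ⟨-v, hneg v hv, neg_mem_Hset_neg_iff.1 (by rwa [neg_neg]),
      fun a => (min_norm_sub_norm_add_neg_right a v).symm⟩

theorem sub_mem_centralPart (h : ∀ u ∈ Hset x y, ∀ v ∈ Hset x y, ‖u + v‖ ≥ ‖u - v‖)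
    {S : Set X} (hS0 : S ⊆ G x y 0) (hneg : ∀ u ∈ S, -u ∈ S)
    (hrefl : ∀ u ∈ S, u ∈ Hset x y → x + y - u ∈ S) {u : X} (hu : u ∈ centralPart S)
    (huH : u ∈ Hset x y) : x + y - u ∈ centralPart S := by
  refine mem_centralPart_of_dominated hu (hrefl u hu.1 huH) fun v hv => ?_
  obtain ⟨v', hv', hv'H, hmin⟩ := exists_mem_Hset_min_eq hS0 hneg hv
  refine ⟨x + y - v', hrefl v' hv' hv'H, ?_⟩
  rw [hmin, min_eq_left (h u huH _ (sub_mem_Hset hv'H))]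
  calc _ ≤ ‖x + y - u - v'‖ := min_le_left _ _
    _ = ‖u - (x + y - v')‖ := by rw [← norm_neg]; congr 1; abel

theorem midpoint_mem_centralPart [NormedSpace ℝ X]
    (h : ∀ u ∈ Hset x y, ∀ v ∈ Hset x y, ‖u + v‖ ≥ ‖u - v‖) {S : Set X} (hS0 : S ⊆ G x y 0)
    (hneg : ∀ u ∈ S, -u ∈ S) (hrefl : ∀ u ∈ S, u ∈ Hset x y → x + y - u ∈ S)
    (hz : ((1 : ℝ) / 2) • (x + y) ∈ S) : ((1 : ℝ) / 2) • (x + y) ∈ centralPart S := by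
  refine ⟨hz, fun v hv => ?_⟩
  obtain ⟨v', hv', hv'H, hmin⟩ := exists_mem_Hset_min_eq hS0 hneg hv
  have hd := min_le_dSet ((isBounded_G_zero x y).subset hS0) hv' (hrefl v' hv' hv'H)
  rw [min_eq_left (h _ hv'H _ (sub_mem_Hset hv'H))] at hd
  have hhalf : ‖((1 : ℝ) / 2) • (x + y) - v'‖ = ‖v' - (x + y - v')‖ / 2 := by
    rw [show ((1 : ℝ) / 2) • (x + y) - v' = ((1 : ℝ) / 2) • -(v' - (x + y - v')) by module,
      norm_smul, norm_neg]
    norm_num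
    ring
  rw [hmin]
  linarith [min_le_left ‖((1 : ℝ) / 2) • (x + y) - v'‖ ‖((1 : ℝ) / 2) • (x + y) + v'‖]

theorem G_invariants [NormedSpace ℝ X] (h : ∀ u ∈ Hset x y, ∀ v ∈ Hset x y, ‖u + v‖ ≥ ‖u - v‖)
    (n : ℕ) :
    (∀ u ∈ G x y n, -u ∈ G x y n) ∧ (∀ u ∈ G x y n, u ∈ Hset x y → x + y - u ∈ G x y n) ∧
      ((1 : ℝ) / 2) • (x + y) ∈ G x y n := by
  induction n with
  | zero =>
    exact ⟨fun u => neg_mem_G_zero, fun u _ huH => Or.inl (sub_mem_Hset huH),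
      Or.inl (midpoint_mem_Hset x y)⟩
  | succ n ih =>
    obtain ⟨hneg, hrefl, hz⟩ := ih
    have hS0 : G x y n ⊆ G x y 0 := G_antitone x y (Nat.zero_le n)
    exact ⟨fun u hu => neg_mem_centralPart hneg hu,
      fun u hu huH => sub_mem_centralPart h hS0 hneg hrefl hu huH,
      midpoint_mem_centralPart h hS0 hneg hrefl hz⟩

end Reflection

theorem intersection_of_G_is_center
    {X : Type*} [NormedAddCommGroup X] [NormedSpace ℝ X]
    (x y : X) (h : ∀ u ∈ Hset x y, ∀ v ∈ Hset x y, ‖u + v‖ ≥ ‖u - v‖) :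
    (∀ n : ℕ, ((1 : ℝ) / 2) • (x + y) ∈ G x y n ∧ -(((1 : ℝ) / 2) • (x + y)) ∈ G x y n) ∧
    (⋂ n : ℕ, G x y n) = {((1 : ℝ) / 2) • (x + y), -(((1 : ℝ) / 2) • (x + y))} := by
  set z : X := ((1 : ℝ) / 2) • (x + y)
  have hz : ∀ n, z ∈ G x y n ∧ -z ∈ G x y n := fun n => by
    obtain ⟨hneg, -, hzn⟩ := G_invariants h n
    exact ⟨hzn, hneg z hzn⟩
  have hzi : z ∈ ⋂ n, G x y n := Set.mem_iInter.2 fun n => (hz n).1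
  have hnzi : -z ∈ ⋂ n, G x y n := Set.mem_iInter.2 fun n => (hz n).2
  refine ⟨hz, Set.Subset.antisymm (fun u hu => ?_) (Set.pair_subset hzi hnzi)⟩
  exact eq_or_eq_neg_of_mem_iInter_iterate_centralPart (G_succ x y) hu hzi
end

section
/- Let X be a real normed space, let x ∈ X be nonzero, and let 0 ≤ a < b be real numbers. Put s = a • x and t = b • x. Then ‖u+v‖ ≥ ‖u−v‖ for all u, v ∈ H_{s,t}. -/
theorem Hset_same_ray_sum_ge_diff
    {X : Type*} [NormedAddCommGroup X] [NormedSpace ℝ X]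
    (x : X) (hx : x ≠ 0) (a b : ℝ) (ha : 0 ≤ a) (hab : a < b) :
    ∀ u ∈ Hset (a • x) (b • x), ∀ v ∈ Hset (a • x) (b • x), ‖u + v‖ ≥ ‖u - v‖ := by
  intro u hu v hv
  obtain ⟨hu1, hu2⟩ := hu
  obtain ⟨hv1, hv2⟩ := hv
  have hst : ‖a • x - b • x‖ = (b - a) * ‖x‖ := by
    rw [← sub_smul, norm_smul, Real.norm_eq_abs, abs_of_neg (by linarith)]
    ring
  have htt : ‖b • x + b • x‖ = 2 * b * ‖x‖ := by
    rw [← add_smul, norm_smul, Real.norm_eq_abs, abs_of_nonneg (by linarith)]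
    ring
  have hxpos : (0:ℝ) ≤ ‖x‖ := norm_nonneg x
  have h1 : ‖u - v‖ ≤ (b - a) * ‖x‖ := by
    calc ‖u - v‖ = ‖(u - a • x) - (v - a • x)‖ := by rw [sub_sub_sub_cancel_right]
      _ ≤ ‖u - a • x‖ + ‖v - a • x‖ := norm_sub_le _ _
      _ = (b - a) * ‖x‖ := by rw [hu1, hv1, hst]; ring
  have h2 : (a + b) * ‖x‖ ≤ ‖u + v‖ := by
    have key : ‖b • x + b • x‖ ≤ ‖u + v‖ + (‖u - b • x‖ + ‖v - b • x‖) := by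
      calc ‖b • x + b • x‖ = ‖(u + v) - ((u - b • x) + (v - b • x))‖ := by abel_nf
        _ ≤ ‖u + v‖ + ‖(u - b • x) + (v - b • x)‖ := norm_sub_le _ _
        _ ≤ ‖u + v‖ + (‖u - b • x‖ + ‖v - b • x‖) := by
            gcongr; exact norm_add_le _ _
    rw [htt, hu2, hv2, hst] at key
    linarith
  have h3 : (b - a) * ‖x‖ ≤ (a + b) * ‖x‖ := by nlinarith
  linarith
end

section
/- Let X be a real normed space and let x, y ∈ X satisfy ‖x+y‖ ≥ 2‖x−y‖. Then ‖u+v‖ ≥ ‖u−v‖ for all u, v ∈ H_{x,y}. -/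
theorem Hset_sum_ge_diff_of_norm_add_ge_two_mul_norm_sub
    {X : Type*} [NormedAddCommGroup X] [NormedSpace ℝ X]
    (x y : X) (h : ‖x + y‖ ≥ 2 * ‖x - y‖) :
    ∀ u ∈ Hset x y, ∀ v ∈ Hset x y, ‖u + v‖ ≥ ‖u - v‖ := by
  rintro u ⟨hux, huy⟩ v ⟨hvx, hvy⟩
  have h1 : ‖u - v‖ ≤ ‖x - y‖ := by
    have e : u - v = (u - x) - (v - x) := by abel
    rw [e]
    calc ‖(u - x) - (v - x)‖ ≤ ‖u - x‖ + ‖v - x‖ := norm_sub_le _ _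
      _ = ‖x - y‖ := by rw [hux, hvx]; ring
  have h2 : ‖x + y‖ ≤ ‖u + v‖ + ‖x - y‖ := by
    have e : x + y = (u + v) - (u - x) - (v - y) := by abel
    rw [e]
    calc ‖(u + v) - (u - x) - (v - y)‖ ≤ ‖(u + v) - (u - x)‖ + ‖v - y‖ := norm_sub_le _ _
      _ ≤ ‖u + v‖ + ‖u - x‖ + ‖v - y‖ := by linarith [norm_sub_le (u + v) (u - x)]
      _ = ‖u + v‖ + ‖x - y‖ := by rw [hux, hvy]; ring
  linarith [norm_nonneg (x - y)]
end

section
/- Let X and Y be real normed spaces and let f : X → Y be a surjective map satisfying the phase-isometry condition. Let x, y ∈ X satisfy ‖x−y‖ < ‖x+y‖. If ‖f(x)−f(y)‖ = ‖x−y‖, and ‖u+v‖ ≥ ‖u−v‖ for all u, v ∈ H_{x,y}, and ‖u'+v'‖ ≥ ‖u'−v'‖ for all u', v' ∈ H_{f(x),f(y)}, then f((1/2)(x+y)) = (1/2)(f(x)+f(y)) or f((1/2)(x+y)) = −(1/2)(f(x)+f(y)). -/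
private lemma pair_eq_pair {a b c d : ℝ} (h : ({a, b} : Set ℝ) = {c, d}) :
    (a = c ∧ b = d) ∨ (a = d ∧ b = c) := by
  have ha : a = c ∨ a = d := by
    have h' : a ∈ ({a, b} : Set ℝ) := Set.mem_insert a {b}
    rw [h] at h'; simpa using h'
  have hb : b = c ∨ b = d := by
    have h' : b ∈ ({a, b} : Set ℝ) := Set.mem_insert_of_mem a rfl
    rw [h] at h'; simpa using h'
  have hc : c = a ∨ c = b := by
    have h' : c ∈ ({c, d} : Set ℝ) := Set.mem_insert c {d}
    rw [← h] at h'; simpa using h'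
  have hd : d = a ∨ d = b := by
    have h' : d ∈ ({c, d} : Set ℝ) := Set.mem_insert_of_mem c rfl
    rw [← h] at h'; simpa using h'
  have hc' : a = c ∨ b = c := hc.imp Eq.symm Eq.symm
  have hd' : a = d ∨ b = d := hd.imp Eq.symm Eq.symm
  tauto

theorem phase_isometry_midpoint_same_sign
    {X Y : Type*} [NormedAddCommGroup X] [NormedSpace ℝ X]
    [NormedAddCommGroup Y] [NormedSpace ℝ Y]
    (f : X → Y) (hsurj : Function.Surjective f) (hf : PhaseIsometry f)
    (x y : X) (hlt : ‖x - y‖ < ‖x + y‖) (heq : ‖f x - f y‖ = ‖x - y‖)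
    (hX : ∀ u ∈ Hset x y, ∀ v ∈ Hset x y, ‖u + v‖ ≥ ‖u - v‖)
    (hY : ∀ u' ∈ Hset (f x) (f y), ∀ v' ∈ Hset (f x) (f y), ‖u' + v'‖ ≥ ‖u' - v'‖) :
    f (((1 : ℝ) / 2) • (x + y)) = ((1 : ℝ) / 2) • (f x + f y) ∨
    f (((1 : ℝ) / 2) • (x + y)) = -(((1 : ℝ) / 2) • (f x + f y)) := by
  have hsum : ‖f x + f y‖ = ‖x + y‖ := by
    rcases pair_eq_pair (hf x y) with ⟨h1, _⟩ | ⟨h1, h2⟩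
    · exact h1
    · rw [heq] at h2; linarith
  set m : X := ((1 : ℝ) / 2) • (x + y) with hm
  set p' : Y := ((1 : ℝ) / 2) • (f x + f y) with hp'
  have hm2 : m + m = x + y := by rw [hm]; module
  have hp2 : p' + p' = f x + f y := by rw [hp']; module
  have habs : ‖(1 : ℝ) / 2‖ = 1 / 2 := by
    rw [Real.norm_eq_abs, abs_of_nonneg]; norm_num
  have hmH : m ∈ Hset x y := by
    constructor
    · rw [show m - x = ((1 : ℝ) / 2) • (y - x) by rw [hm]; module, norm_smul, habs,
        norm_sub_rev]
      ring
    · rw [show m - y = ((1 : ℝ) / 2) • (x - y) by rw [hm]; module, norm_smul, habs]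
      ring
  have hp'H : p' ∈ Hset (f x) (f y) := by
    constructor
    · rw [show p' - f x = ((1 : ℝ) / 2) • (f y - f x) by rw [hp']; module, norm_smul, habs,
        norm_sub_rev]
      ring
    · rw [show p' - f y = ((1 : ℝ) / 2) • (f x - f y) by rw [hp']; module, norm_smul, habs]
      ring
  -- L2: sign-corrected distance and sum preservation
  have L2 : ∀ u ∈ Hset x y, ∀ v ∈ Hset x y, ∀ u' ∈ Hset (f x) (f y),
      ∀ v' ∈ Hset (f x) (f y), (f u = u' ∨ f u = -u') → (f v = v' ∨ f v = -v') →
      ‖u' - v'‖ = ‖u - v‖ ∧ ‖u' + v'‖ = ‖u + v‖ := by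
    intro u hu v hv u' hu' v' hv' hsu hsv
    have key : ({‖f u + f v‖, ‖f u - f v‖} : Set ℝ) = {‖u' + v'‖, ‖u' - v'‖} := by
      rcases hsu with h1 | h1 <;> rcases hsv with h2 | h2 <;> rw [h1, h2]
      · rw [show u' + -v' = -(v' - u') by abel, show u' - -v' = u' + v' by abel,
          norm_neg, norm_sub_rev, Set.pair_comm]
      · rw [show -u' + v' = -(u' - v') by abel, show -u' - v' = -(u' + v') by abel,
          norm_neg, norm_neg, Set.pair_comm]
      · rw [show -u' + -v' = -(u' + v') by abel, show -u' - -v' = -(u' - v') by abel,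
          norm_neg, norm_neg]
    have hset := key.symm.trans (hf u v)
    rcases pair_eq_pair hset with ⟨e1, e2⟩ | ⟨e1, e2⟩
    · exact ⟨e2, e1⟩
    · have h1 := hX u hu v hv
      have h2 := hY u' hu' v' hv'
      constructor <;> linarith
  -- L3: images of H-points lie in H' up to sign
  have L3 : ∀ u ∈ Hset x y, f u ∈ Hset (f x) (f y) ∨ -f u ∈ Hset (f x) (f y) := by
    intro u hu
    obtain ⟨hux, huy⟩ := hu
    rcases pair_eq_pair (hf u x) with ⟨h1a, h1b⟩ | ⟨h1a, h1b⟩ <;>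
      rcases pair_eq_pair (hf u y) with ⟨h2a, h2b⟩ | ⟨h2a, h2b⟩
    · left
      exact ⟨by rw [heq, h1b]; exact hux, by rw [heq, h2b]; exact huy⟩
    · exfalso
      have t := norm_add_le (f x - f u) (f u + f y)
      rw [show f x - f u + (f u + f y) = f x + f y by abel, norm_sub_rev] at t
      rw [hsum, h1b, h2a] at t
      rw [hux, huy] at t
      linarith
    · exfalso
      have t := norm_add_le (f u + f x) (f y - f u)
      rw [show f u + f x + (f y - f u) = f x + f y by abel, norm_sub_rev] at t
      rw [hsum, h1a, h2b] at t
      rw [hux, huy] at t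
      linarith
    · right
      constructor
      · rw [show -f u - f x = -(f u + f x) by abel, norm_neg, heq, h1a]; exact hux
      · rw [show -f u - f y = -(f u + f y) by abel, norm_neg, heq, h2a]; exact huy
  -- L4: every H'-point has a preimage in H up to sign
  have L4 : ∀ u' ∈ Hset (f x) (f y), ∃ u ∈ Hset x y, f u = u' ∨ f u = -u' := by
    intro u' hu'
    obtain ⟨q, hq⟩ := hsurj u'
    obtain ⟨h1', h2'⟩ := hu'
    rw [← hq, heq] at h1' h2'
    have c1 : ‖q - x‖ = ‖x - y‖ / 2 ∨ ‖q + x‖ = ‖x - y‖ / 2 := by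
      rcases pair_eq_pair (hf q x) with ⟨e1, e2⟩ | ⟨e1, e2⟩
      · exact Or.inl (e2.symm.trans h1')
      · exact Or.inr (e2.symm.trans h1')
    have c2 : ‖q - y‖ = ‖x - y‖ / 2 ∨ ‖q + y‖ = ‖x - y‖ / 2 := by
      rcases pair_eq_pair (hf q y) with ⟨e1, e2⟩ | ⟨e1, e2⟩
      · exact Or.inl (e2.symm.trans h2')
      · exact Or.inr (e2.symm.trans h2')
    rcases c1 with hc1 | hc1 <;> rcases c2 with hc2 | hc2
    · exact ⟨q, ⟨hc1, hc2⟩, Or.inl hq⟩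
    · exfalso
      have t := norm_add_le (x - q) (q + y)
      rw [show x - q + (q + y) = x + y by abel, norm_sub_rev] at t
      rw [hc1, hc2] at t
      linarith
    · exfalso
      have t := norm_add_le (q + x) (y - q)
      rw [show q + x + (y - q) = x + y by abel, norm_sub_rev] at t
      rw [hc1, hc2] at t
      linarith
    · refine ⟨-q, ⟨?_, ?_⟩, ?_⟩
      · rw [show -q - x = -(q + x) by abel, norm_neg]; exact hc1
      · rw [show -q - y = -(q + y) by abel, norm_neg]; exact hc2
      · rcases pair_eq_pair (hf q (-q)) with ⟨e1, e2⟩ | ⟨e1, e2⟩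
        · right
          have h0 : ‖f q + f (-q)‖ = 0 := by rw [e1]; simp
          have h0' : f q + f (-q) = 0 := norm_eq_zero.mp h0
          rw [← hq]
          exact (neg_eq_of_add_eq_zero_right h0').symm
        · left
          have h0 : ‖f q - f (-q)‖ = 0 := by rw [e2]; simp
          have h0' : f q - f (-q) = 0 := norm_eq_zero.mp h0
          rw [← hq, ← sub_eq_zero]
          rw [show f (-q) - f q = -(f q - f (-q)) by abel, h0', neg_zero]
  -- main iteration
  obtain ⟨w, hwH, hw⟩ := L4 p' hp'H
  set δ := ‖m - w‖ with hδdef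
  have hδ0 : (0 : ℝ) ≤ δ := norm_nonneg _
  have key : ∀ n : ℕ, ∃ u ∈ Hset x y,
      ‖u - m‖ = 2 * (n : ℝ) * δ ∧ ‖u - w‖ = (2 * (n : ℝ) + 1) * δ := by
    intro n
    induction n with
    | zero =>
      refine ⟨m, hmH, by simp, ?_⟩
      rw [← hδdef]; push_cast; ring
    | succ n ih =>
      obtain ⟨u, huH, hum, huw⟩ := ih
      obtain ⟨u', hu'H, hsign⟩ : ∃ u', u' ∈ Hset (f x) (f y) ∧ (f u = u' ∨ f u = -u') := by
        rcases L3 u huH with h | h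
        · exact ⟨f u, h, Or.inl rfl⟩
        · exact ⟨-f u, h, Or.inr (by simp)⟩
      have hup : ‖u' - p'‖ = (2 * (n : ℝ) + 1) * δ := by
        rw [(L2 u huH w hwH u' hu'H p' hp'H hsign hw).1, huw]
      have hpu : ‖p' - u'‖ = (2 * (n : ℝ) + 1) * δ := by rw [norm_sub_rev]; exact hup
      set v' : Y := f x + f y - u' with hv'def
      have hv'H : v' ∈ Hset (f x) (f y) := by
        constructor
        · rw [show v' - f x = -(u' - f y) by rw [hv'def]; abel, norm_neg]; exact hu'H.2
        · rw [show v' - f y = -(u' - f x) by rw [hv'def]; abel, norm_neg]; exact hu'H.1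
      obtain ⟨v, hvH, hv⟩ := L4 v' hv'H
      have hvu : ‖v - u‖ = 2 * ((2 * (n : ℝ) + 1) * δ) := by
        have h := (L2 v hvH u huH v' hv'H u' hu'H hv hsign).1
        rw [show v' - u' = (2 : ℝ) • (p' - u') by
          rw [hv'def, ← hp2]; module, norm_smul] at h
        rw [← h, hpu]; norm_num
      have hvw : ‖v - w‖ = (2 * (n : ℝ) + 1) * δ := by
        have h := (L2 v hvH w hwH v' hv'H p' hp'H hv hw).1
        rw [show v' - p' = p' - u' by rw [hv'def, ← hp2]; abel] at h
        rw [← h, hpu]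
      have hvm : ‖v - m‖ = (2 * (n : ℝ) + 2) * δ := by
        have t1 := norm_add_le (v - m) (m - u)
        rw [show v - m + (m - u) = v - u by abel] at t1
        have t2 := norm_add_le (v - w) (w - m)
        rw [show v - w + (w - m) = v - m by abel] at t2
        have hmu : ‖m - u‖ = 2 * (n : ℝ) * δ := by rw [norm_sub_rev]; exact hum
        have hwm : ‖w - m‖ = δ := by rw [norm_sub_rev]
        rw [hvu, hmu] at t1
        rw [hvw, hwm] at t2
        linarith
      have hmv : ‖m - v‖ = (2 * (n : ℝ) + 2) * δ := by rw [norm_sub_rev]; exact hvm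
      refine ⟨x + y - v, ⟨?_, ?_⟩, ?_, ?_⟩
      · rw [show x + y - v - x = -(v - y) by abel, norm_neg]; exact hvH.2
      · rw [show x + y - v - y = -(v - x) by abel, norm_neg]; exact hvH.1
      · rw [show x + y - v - m = m - v by rw [← hm2]; abel, hmv]; push_cast; ring
      · have d1 : ‖x + y - v - v‖ = 2 * ((2 * (n : ℝ) + 2) * δ) := by
          rw [show x + y - v - v = (2 : ℝ) • (m - v) by rw [← hm2]; module,
            norm_smul, hmv]
          norm_num
        have t3 := norm_add_le (x + y - v - w) (w - v)
        rw [show x + y - v - w + (w - v) = x + y - v - v by abel] at t3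
        have t4 := norm_add_le (x + y - v - m) (m - w)
        rw [show x + y - v - m + (m - w) = x + y - v - w by abel] at t4
        have hwv : ‖w - v‖ = (2 * (n : ℝ) + 1) * δ := by rw [norm_sub_rev]; exact hvw
        have hu1m : ‖x + y - v - m‖ = (2 * (n : ℝ) + 2) * δ := by
          rw [show x + y - v - m = m - v by rw [← hm2]; abel, hmv]
        rw [d1, hwv] at t3
        rw [hu1m, ← hδdef] at t4
        push_cast
        linarith
  have hδz : δ = 0 := by
    by_contra hne
    have hpos : 0 < δ := lt_of_le_of_ne hδ0 (Ne.symm hne)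
    obtain ⟨n, hn⟩ := exists_nat_gt (‖x - y‖ / (2 * δ))
    obtain ⟨u, huH, hum, -⟩ := key n
    have hb : ‖u - m‖ ≤ ‖x - y‖ := by
      have t := norm_add_le (u - x) (x - m)
      rw [show u - x + (x - m) = u - m by abel] at t
      have h1 : ‖u - x‖ = ‖x - y‖ / 2 := huH.1
      have h2 : ‖x - m‖ = ‖x - y‖ / 2 := by rw [norm_sub_rev]; exact hmH.1
      linarith
    have hd : ‖x - y‖ / (2 * δ) * (2 * δ) < (n : ℝ) * (2 * δ) := by
      apply mul_lt_mul_of_pos_right hn; positivity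
    rw [div_mul_cancel₀ _ (by positivity)] at hd
    rw [hum] at hb
    nlinarith
  have hmw : m = w := by
    have h0 : ‖m - w‖ = 0 := by rw [← hδdef]; exact hδz
    exact sub_eq_zero.mp (norm_eq_zero.mp h0)
  rcases hw with h | h
  · left; rw [← hmw] at h; exact h
  · right; rw [← hmw] at h; exact h
end

section
/- Let X and Y be real normed spaces and let f : X → Y be a surjective map satisfying the phase-isometry condition. Let x, y ∈ X satisfy ‖x−y‖ < ‖x+y‖. If ‖f(x)−f(y)‖ = ‖x+y‖, and ‖u+v‖ ≥ ‖u−v‖ for all u, v ∈ H_{x,y}, and ‖u'+v'‖ ≥ ‖u'−v'‖ for all u', v' ∈ H_{f(x),−f(y)}, then f((1/2)(x+y)) = (1/2)(f(x)−f(y)) or f((1/2)(x+y)) = −(1/2)(f(x)−f(y)). -/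
open Set Function

lemma le_of_monotone_sub_of_bddAbove {D : ℕ → ℝ} (hmono : Monotone fun n => D (n + 1) - D n)
    (hbdd : BddAbove (range D)) : D 1 ≤ D 0 := by
  have hlin : ∀ n : ℕ, D 0 + n * (D 1 - D 0) ≤ D n := by
    intro n
    induction n with
    | zero => simp
    | succ n ih =>
      have := hmono (Nat.zero_le n)
      push_cast
      simp only [zero_add] at this
      linarith
  by_contra! h
  obtain ⟨C, hC⟩ := hbdd
  obtain ⟨n, hn⟩ := exists_nat_gt ((C - D 0) / (D 1 - D 0))
  rw [div_lt_iff₀ (sub_pos.2 h)] at hn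
  linarith [hlin n, hC (mem_range_self n)]

lemma eq_of_pair_eq_pair_of_le {a b c d : ℝ} (h : ({a, b} : Set ℝ) = {c, d}) (hab : b ≤ a)
    (hcd : d ≤ c) : b = d := by
  rcases Set.pair_eq_pair_iff.1 h with ⟨-, h⟩ | ⟨h₁, h₂⟩
  · exact h
  · linarith

lemma norm_pair_eq_of_eq_or_eq_neg {E : Type*} [SeminormedAddCommGroup E] {h k u v : E}
    (hh : h = u ∨ h = -u) (hk : k = v ∨ k = -v) :
    ({‖h + k‖, ‖h - k‖} : Set ℝ) = {‖u + v‖, ‖u - v‖} := by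
  rcases hh with rfl | rfl <;> rcases hk with rfl | rfl
  · rfl
  · rw [← sub_eq_add_neg, sub_neg_eq_add, pair_comm]
  · rw [neg_add_eq_sub, norm_sub_rev, ← neg_add', norm_neg, pair_comm]
  · rw [← neg_add, norm_neg, neg_sub_neg, norm_sub_rev]

section Hset

variable {S : Type*} [NormedAddCommGroup S]

lemma norm_add_le_of_norm_sub_eq_of_norm_add_eq {a b z : S} {r : ℝ} (ha : ‖z - a‖ = r)
    (hb : ‖z + b‖ = r) : ‖a + b‖ ≤ 2 * r := by
  calc ‖a + b‖ = ‖(z + b) - (z - a)‖ := by congr 1; abel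
    _ ≤ ‖z + b‖ + ‖z - a‖ := norm_sub_le _ _
    _ = 2 * r := by rw [ha, hb]; ring

lemma neg_notMem_hset {a b u : S} (hab : ‖a - b‖ < ‖a + b‖) (hu : u ∈ Hset a b) :
    -u ∉ Hset a b := by
  intro hnu
  have hb : ‖u + b‖ = ‖a - b‖ / 2 := by rw [← norm_neg, neg_add']; exact hnu.2
  linarith [norm_add_le_of_norm_sub_eq_of_norm_add_eq hu.1 hb]

lemma mem_hset_or_neg_mem_hset {a b z : S} (hab : ‖a - b‖ < ‖a + b‖)
    (ha : ‖z - a‖ = ‖a - b‖ / 2 ∨ ‖z + a‖ = ‖a - b‖ / 2)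
    (hb : ‖z - b‖ = ‖a - b‖ / 2 ∨ ‖z + b‖ = ‖a - b‖ / 2) :
    z ∈ Hset a b ∨ -z ∈ Hset a b := by
  simp only [Hset, mem_ofPred_eq, ← neg_add', norm_neg]
  rcases ha with ha | ha <;> rcases hb with hb | hb
  · exact Or.inl ⟨ha, hb⟩
  · linarith [norm_add_le_of_norm_sub_eq_of_norm_add_eq ha hb]
  · linarith [add_comm a b ▸ norm_add_le_of_norm_sub_eq_of_norm_add_eq hb ha]
  · exact Or.inr ⟨ha, hb⟩

lemma add_sub_mem_hset {a b u : S} (hu : u ∈ Hset a b) : a + b - u ∈ Hset a b := by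
  refine ⟨?_, ?_⟩
  · rw [show a + b - u - a = -(u - b) by abel, norm_neg]; exact hu.2
  · rw [show a + b - u - b = -(u - a) by abel, norm_neg]; exact hu.1

lemma isBounded_hset (a b : S) : Bornology.IsBounded (Hset a b) :=
  (Metric.isBounded_closedBall (x := a) (r := ‖a - b‖ / 2)).subset fun u hu => by
    rw [Metric.mem_closedBall, dist_eq_norm, hu.1]

lemma half_smul_add_mem_hset [NormedSpace ℝ S] (a b : S) :
    ((1 : ℝ) / 2) • (a + b) ∈ Hset a b := by
  have key : ∀ a b : S, ‖((1 : ℝ) / 2) • (a + b) - a‖ = ‖a - b‖ / 2 := fun a b => by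
    rw [show ((1 : ℝ) / 2) • (a + b) - a = ((1 : ℝ) / 2) • (b - a) by module, norm_smul,
      norm_sub_rev]
    norm_num
    ring
  exact ⟨key a b, by rw [add_comm, ← norm_sub_rev b a]; exact key b a⟩

end Hset

section Center

variable {X Y : Type*}

theorem sub_eq_of_isBounded_of_norm_map_sub_eq_two_mul [NormedAddCommGroup Y] {B : Set Y}
    {ρ : Y → Y} {G d : Y} (hB : Bornology.IsBounded B) (hBd : ∀ h ∈ B, d - h ∈ B) (hG : G ∈ B)
    (hmaps : MapsTo ρ B B) (hρ : ∀ h ∈ B, ‖ρ h - G‖ = ‖h - G‖)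
    (hdisp : ∀ h ∈ B, ‖ρ h - h‖ = 2 * ‖h - G‖) : d - G = G := by
  set φ : Y → Y := fun h => d - ρ h
  have hφ : MapsTo φ B B := fun h hh => hBd _ (hmaps hh)
  have hφ_far : ∀ h ∈ B, ‖φ h - (d - G)‖ = ‖h - G‖ := fun h hh => by
    rw [show φ h - (d - G) = -(ρ h - G) by simp only [φ]; abel, norm_neg, hρ h hh]
  have hφ_near : ∀ h ∈ B, 2 * ‖h - G‖ - ‖h - (d - G)‖ ≤ ‖φ h - G‖ := fun h hh => by
    rw [← hdisp h hh, norm_sub_rev, show φ h - G = (h - ρ h) - (h - (d - G)) by simp only [φ]; abel]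
    exact norm_sub_norm_le _ _
  set D : ℕ → ℝ := fun n => ‖φ^[n] G - G‖
  have hmono : Monotone fun n => D (n + 1) - D n := monotone_nat_of_le_succ fun n => by
    have hn := hφ.iterate n hG
    have := hφ_near _ (hφ hn)
    simp only [D, iterate_succ_apply'] at this ⊢
    rw [hφ_far _ hn] at this
    linarith
  have hbdd : BddAbove (range D) := by
    obtain ⟨C, hC⟩ := Metric.isBounded_iff.1 hB
    exact ⟨C, by rintro _ ⟨n, rfl⟩; simpa [D, dist_eq_norm] using hC (hφ.iterate n hG) hG⟩
  have h1 := le_of_monotone_sub_of_bddAbove hmono hbdd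
  have hρG : ρ G = G := by simpa [sub_eq_zero] using hdisp G hG
  simp only [D, iterate_one, iterate_zero_apply, sub_self, norm_zero, φ, hρG] at h1
  exact sub_eq_zero.1 (norm_le_zero_iff.1 h1)

theorem map_half_smul_eq_of_isometryOn_of_surjOn [NormedAddCommGroup X] [NormedSpace ℝ X]
    [NormedAddCommGroup Y] [NormedSpace ℝ Y] {A : Set X} {B : Set Y} {T : X → Y} {c : X} {d : Y}
    (hB : Bornology.IsBounded B) (hT : ∀ p ∈ A, ∀ q ∈ A, ‖T p - T q‖ = ‖p - q‖)
    (hmaps : MapsTo T A B) (hsurj : SurjOn T A B) (hm : ((1 : ℝ) / 2) • c ∈ A)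
    (hA : ∀ p ∈ A, c - p ∈ A) (hBd : ∀ h ∈ B, d - h ∈ B) :
    T (((1 : ℝ) / 2) • c) = ((1 : ℝ) / 2) • d := by
  set S := invFunOn T A
  have hS : ∀ h ∈ B, S h ∈ A := fun h hh => invFunOn_mem (hsurj hh)
  have hTS : ∀ h ∈ B, T (S h) = h := fun h hh => invFunOn_eq (hsurj hh)
  have hρ : ∀ h ∈ B, ‖T (c - S h) - T (((1 : ℝ) / 2) • c)‖ = ‖h - T (((1 : ℝ) / 2) • c)‖ :=
    fun h hh => by
      rw [hT _ (hA _ (hS h hh)) _ hm,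
        show c - S h - ((1 : ℝ) / 2) • c = -(S h - ((1 : ℝ) / 2) • c) by module, norm_neg,
        ← hT _ (hS h hh) _ hm, hTS h hh]
  have hdisp : ∀ h ∈ B, ‖T (c - S h) - h‖ = 2 * ‖h - T (((1 : ℝ) / 2) • c)‖ := fun h hh =>
    calc ‖T (c - S h) - h‖ = ‖T (c - S h) - T (S h)‖ := by rw [hTS h hh]
      _ = ‖c - S h - S h‖ := hT _ (hA _ (hS h hh)) _ (hS h hh)
      _ = 2 * ‖((1 : ℝ) / 2) • c - S h‖ := by
        rw [show c - S h - S h = (2 : ℝ) • (((1 : ℝ) / 2) • c - S h) by module, norm_smul]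
        norm_num
      _ = 2 * ‖h - T (((1 : ℝ) / 2) • c)‖ := by
        rw [← hT _ hm _ (hS h hh), hTS h hh, norm_sub_rev]
  have hd := sub_eq_of_isBounded_of_norm_map_sub_eq_two_mul hB hBd (hmaps hm)
    (fun h hh => hmaps (hA _ (hS h hh))) hρ hdisp
  rw [sub_eq_iff_eq_add.1 hd]
  module

end Center

namespace PhaseIsometry

variable {X Y : Type*} [NormedAddCommGroup X] [NormedAddCommGroup Y] {f : X → Y}

lemma norm_add_eq_of_norm_sub_eq (hf : PhaseIsometry f) {x y : X} (hne : ‖x - y‖ ≠ ‖x + y‖)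
    (heq : ‖f x - f y‖ = ‖x + y‖) : ‖f x + f y‖ = ‖x - y‖ := by
  rcases Set.pair_eq_pair_iff.1 (hf x y) with ⟨-, h⟩ | ⟨h, -⟩
  · exact absurd (h.symm.trans heq) hne
  · exact h

lemma map_neg_eq_or (hf : PhaseIsometry f) (p : X) : f (-p) = f p ∨ f (-p) = -f p := by
  have : (0 : ℝ) ∈ ({‖f p + f (-p)‖, ‖f p - f (-p)‖} : Set ℝ) := by rw [hf p (-p)]; simp
  simp only [mem_insert_iff, mem_singleton_iff, eq_comm, norm_eq_zero, sub_eq_zero,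
    add_eq_zero_iff_eq_neg'] at this
  exact this.symm.imp eq_comm.1 id

lemma norm_sub_neg_lt (hf : PhaseIsometry f) {x y : X} (hlt : ‖x - y‖ < ‖x + y‖)
    (heq : ‖f x - f y‖ = ‖x + y‖) : ‖f x - -f y‖ < ‖f x + -f y‖ := by
  rwa [sub_neg_eq_add, ← sub_eq_add_neg, hf.norm_add_eq_of_norm_sub_eq hlt.ne heq, heq]

lemma map_mem_hset_or_neg_mem_hset (hf : PhaseIsometry f) {x y p : X}
    (hlt : ‖x - y‖ < ‖x + y‖) (heq : ‖f x - f y‖ = ‖x + y‖) (hp : p ∈ Hset x y) :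
    f p ∈ Hset (f x) (-f y) ∨ -f p ∈ Hset (f x) (-f y) := by
  refine mem_hset_or_neg_mem_hset (hf.norm_sub_neg_lt hlt heq) ?_ ?_ <;>
    simp only [sub_neg_eq_add, hf.norm_add_eq_of_norm_sub_eq hlt.ne heq, ← sub_eq_add_neg]
  · rcases Set.pair_eq_pair_iff.1 (hf p x) with ⟨-, h⟩ | ⟨h, -⟩
    · exact Or.inl (h.trans hp.1)
    · exact Or.inr (h.trans hp.1)
  · rcases Set.pair_eq_pair_iff.1 (hf p y) with ⟨-, h⟩ | ⟨h, -⟩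
    · exact Or.inr (h.trans hp.2)
    · exact Or.inl (h.trans hp.2)

lemma mem_hset_or_neg_mem_hset_of_map (hf : PhaseIsometry f) {x y p : X}
    (hlt : ‖x - y‖ < ‖x + y‖) (heq : ‖f x - f y‖ = ‖x + y‖)
    (hp : f p ∈ Hset (f x) (-f y)) : p ∈ Hset x y ∨ -p ∈ Hset x y := by
  obtain ⟨hpx, hpy⟩ := hp
  simp only [sub_neg_eq_add, hf.norm_add_eq_of_norm_sub_eq hlt.ne heq] at hpx hpy
  refine mem_hset_or_neg_mem_hset hlt ?_ ?_
  · rcases Set.pair_eq_pair_iff.1 (hf p x) with ⟨-, h⟩ | ⟨-, h⟩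
    · exact Or.inl (h.symm.trans hpx)
    · exact Or.inr (h.symm.trans hpx)
  · rcases Set.pair_eq_pair_iff.1 (hf p y) with ⟨h, -⟩ | ⟨h, -⟩
    · exact Or.inr (h.symm.trans hpy)
    · exact Or.inl (h.symm.trans hpy)

lemma norm_sub_eq_of_eq_or_eq_neg (hf : PhaseIsometry f) {p q : X} {h k : Y}
    (hpq : ‖p - q‖ ≤ ‖p + q‖) (hhk : ‖h - k‖ ≤ ‖h + k‖) (hh : h = f p ∨ h = -f p)
    (hk : k = f q ∨ k = -f q) : ‖h - k‖ = ‖p - q‖ :=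
  eq_of_pair_eq_pair_of_le ((norm_pair_eq_of_eq_or_eq_neg hh hk).trans (hf p q)) hhk hpq

lemma exists_mem_hset_map_eq_or_eq_neg (hf : PhaseIsometry f) (hsurj : Surjective f) {x y : X}
    (hlt : ‖x - y‖ < ‖x + y‖) (heq : ‖f x - f y‖ = ‖x + y‖) {h : Y}
    (hh : h ∈ Hset (f x) (-f y)) : ∃ q ∈ Hset x y, f q = h ∨ f q = -h := by
  obtain ⟨p, rfl⟩ := hsurj h
  rcases hf.mem_hset_or_neg_mem_hset_of_map hlt heq hh with hp | hp
  · exact ⟨p, hp, Or.inl rfl⟩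
  · exact ⟨-p, hp, hf.map_neg_eq_or p⟩

end PhaseIsometry

section SignAdjust

variable {X Y : Type*} {B : Set Y} {f : X → Y} {p : X}

open Classical in
noncomputable def signAdjust [Neg Y] (B : Set Y) (f : X → Y) (p : X) : Y :=
  if f p ∈ B then f p else -f p

lemma signAdjust_eq_or [Neg Y] : signAdjust B f p = f p ∨ signAdjust B f p = -f p := by
  unfold signAdjust
  split_ifs <;> simp

lemma signAdjust_mem [Neg Y] (h : f p ∈ B ∨ -f p ∈ B) : signAdjust B f p ∈ B := by
  unfold signAdjust
  split_ifs with hp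
  · exact hp
  · exact h.resolve_left hp

lemma signAdjust_eq [InvolutiveNeg Y] {h : Y} (hh : h ∈ B) (hnh : -h ∉ B)
    (hp : f p = h ∨ f p = -h) : signAdjust B f p = h := by
  unfold signAdjust
  rcases hp with hp | hp <;> simp [hp, hh, hnh]

end SignAdjust

theorem phase_isometry_midpoint_opposite_sign
    {X Y : Type*} [NormedAddCommGroup X] [NormedSpace ℝ X]
    [NormedAddCommGroup Y] [NormedSpace ℝ Y]
    (f : X → Y) (hsurj : Function.Surjective f) (hf : PhaseIsometry f)
    (x y : X) (hlt : ‖x - y‖ < ‖x + y‖) (heq : ‖f x - f y‖ = ‖x + y‖)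
    (hX : ∀ u ∈ Hset x y, ∀ v ∈ Hset x y, ‖u + v‖ ≥ ‖u - v‖)
    (hY : ∀ u' ∈ Hset (f x) (-f y), ∀ v' ∈ Hset (f x) (-f y), ‖u' + v'‖ ≥ ‖u' - v'‖) :
    f (((1 : ℝ) / 2) • (x + y)) = ((1 : ℝ) / 2) • (f x - f y) ∨
    f (((1 : ℝ) / 2) • (x + y)) = -(((1 : ℝ) / 2) • (f x - f y)) := by
  set T := signAdjust (Hset (f x) (-f y)) f
  have hmaps : MapsTo T (Hset x y) (Hset (f x) (-f y)) := fun p hp =>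
    signAdjust_mem (hf.map_mem_hset_or_neg_mem_hset hlt heq hp)
  have hiso : ∀ p ∈ Hset x y, ∀ q ∈ Hset x y, ‖T p - T q‖ = ‖p - q‖ := fun p hp q hq =>
    hf.norm_sub_eq_of_eq_or_eq_neg (hX p hp q hq) (hY _ (hmaps hp) _ (hmaps hq))
      signAdjust_eq_or signAdjust_eq_or
  have hsurjOn : SurjOn T (Hset x y) (Hset (f x) (-f y)) := fun h hh => by
    obtain ⟨q, hq, hfq⟩ := hf.exists_mem_hset_map_eq_or_eq_neg hsurj hlt heq hh
    exact ⟨q, hq, signAdjust_eq hh (neg_notMem_hset (hf.norm_sub_neg_lt hlt heq) hh) hfq⟩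
  have hT := map_half_smul_eq_of_isometryOn_of_surjOn (isBounded_hset _ _) hiso hmaps hsurjOn
    (half_smul_add_mem_hset x y) (fun _ => add_sub_mem_hset) (fun _ => add_sub_mem_hset)
  rw [← sub_eq_add_neg] at hT
  rcases signAdjust_eq_or (B := Hset (f x) (-f y)) (f := f) (p := ((1 : ℝ) / 2) • (x + y))
    with h | h
  · exact Or.inl (h.symm.trans hT)
  · exact Or.inr (neg_eq_iff_eq_neg.1 (h.symm.trans hT))
end

section
/- Let X and Y be real normed spaces and let f : X → Y be a surjective map satisfying the phase-isometry condition. If x, y ∈ X are nonzero and satisfy ‖x+y‖ ≥ 2‖x−y‖, then f((1/2)(x+y)) equals one of (1/2)(f(x)+f(y)), −(1/2)(f(x)+f(y)), (1/2)(f(x)−f(y)), or −(1/2)(f(x)−f(y)). -/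
section MidpointSets

variable {X Y : Type*}

def midpointSets (ρ : X → X → ℝ) (p q : X) (d : ℝ) : ℕ → Set X
  | 0 => {w | ρ w p ≤ d / 2 ∧ ρ w q ≤ d / 2}
  | n + 1 => {w | w ∈ midpointSets ρ p q d n ∧
      ∀ w' ∈ midpointSets ρ p q d n, ρ w w' ≤ d / 2 ^ (n + 1)}

variable {ρ : X → X → ℝ} {p q : X} {d : ℝ}

theorem midpointSets_antitone : Antitone (midpointSets ρ p q d) :=
  antitone_nat_of_succ_le fun _ _ hw => hw.1

theorem mem_midpointSets_iff_apply_mem {σ : Y → Y → ℝ} {f : X → Y}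
    (hsurj : Function.Surjective f) (hf : ∀ u v, σ (f u) (f v) = ρ u v) {p' q' : Y}
    (hp : ∀ w, σ (f w) p' = ρ w p) (hq : ∀ w, σ (f w) q' = ρ w q) (n : ℕ) (w : X) :
    w ∈ midpointSets ρ p q d n ↔ f w ∈ midpointSets σ p' q' d n := by
  induction n generalizing w with
  | zero => simp only [midpointSets, Set.mem_ofPred_eq, hp, hq]
  | succ n ih => simp only [midpointSets, Set.mem_ofPred_eq, ih, hsurj.forall, hf]

theorem nonpos_of_forall_mem_midpointSets {a b : X} (ha : ∀ n, a ∈ midpointSets ρ p q d n)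
    (hb : ∀ n, b ∈ midpointSets ρ p q d n) : ρ a b ≤ 0 :=
  ge_of_tendsto' (tendsto_const_nhds.div_atTop
      ((tendsto_pow_atTop_atTop_of_one_lt one_lt_two).comp (Filter.tendsto_add_atTop_nat 1)))
    fun n => (ha (n + 1)).2 b (hb n)

end MidpointSets

section PhaseDist

variable {E : Type*} [SeminormedAddCommGroup E]

def phaseDist (u v : E) : ℝ := min ‖u - v‖ ‖u + v‖

theorem phaseDist_le_norm_sub (u v : E) : phaseDist u v ≤ ‖u - v‖ := min_le_left _ _

theorem phaseDist_comm (u v : E) : phaseDist u v = phaseDist v u := by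
  rw [phaseDist, phaseDist, norm_sub_rev, add_comm]

theorem phaseDist_neg_right (u v : E) : phaseDist u (-v) = phaseDist u v := by
  rw [phaseDist, phaseDist, sub_neg_eq_add, ← sub_eq_add_neg, min_comm]

theorem phaseDist_neg_left (u v : E) : phaseDist (-u) v = phaseDist u v := by
  rw [phaseDist_comm, phaseDist_neg_right, phaseDist_comm]

theorem neg_mem_midpointSets_phaseDist {p q w : E} {d : ℝ} {n : ℕ}
    (hw : w ∈ midpointSets phaseDist p q d n) : -w ∈ midpointSets phaseDist p q d n :=
  (mem_midpointSets_iff_apply_mem neg_surjective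
    (fun u v => by rw [phaseDist_neg_left, phaseDist_neg_right])
    (phaseDist_neg_left · p) (phaseDist_neg_left · q) n w).1 hw

theorem eq_or_eq_neg_of_phaseDist_nonpos {F : Type*} [NormedAddCommGroup F] {u v : F}
    (h : phaseDist u v ≤ 0) : u = v ∨ u = -v := by
  rcases min_le_iff.mp h with h | h
  · exact .inl (sub_eq_zero.mp (norm_le_zero_iff.mp h))
  · exact .inr (eq_neg_of_add_eq_zero_left (norm_le_zero_iff.mp h))

end PhaseDist

section Lens

variable {E : Type*} [SeminormedAddCommGroup E] {p q : E}

def lens (p q : E) : Set E := {w | ‖w - p‖ ≤ ‖p - q‖ / 2 ∧ ‖w - q‖ ≤ ‖p - q‖ / 2}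

local notation "W" => midpointSets phaseDist p q ‖p - q‖

theorem lens_subset_midpointSets_zero : lens p q ⊆ W 0 := fun _ hw =>
  ⟨(phaseDist_le_norm_sub _ _).trans hw.1, (phaseDist_le_norm_sub _ _).trans hw.2⟩

theorem add_sub_mem_lens {w : E} (hw : w ∈ lens p q) : p + q - w ∈ lens p q := by
  refine ⟨?_, ?_⟩
  · rw [show p + q - w - p = -(w - q) by abel, norm_neg]; exact hw.2
  · rw [show p + q - w - q = -(w - p) by abel, norm_neg]; exact hw.1

theorem norm_sub_le_of_mem_lens {w w' : E} (hw : w ∈ lens p q) (hw' : w' ∈ lens p q) :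
    ‖w - w'‖ ≤ ‖p - q‖ := by
  have := norm_sub_le_norm_sub_add_norm_sub w p w'
  rw [norm_sub_rev p w'] at this
  linarith [hw.1, hw'.1]

theorem phaseDist_eq_norm_sub_of_mem_lens (hs : 2 * ‖p - q‖ ≤ ‖p + q‖) {w w' : E}
    (hw : w ∈ lens p q) (hw' : w' ∈ lens p q) : phaseDist w w' = ‖w - w'‖ := by
  refine min_eq_left ((norm_sub_le_of_mem_lens hw hw').trans ?_)
  have h₁ := norm_sub_le (w + w' - (w - p)) (w' - q)
  have h₂ := norm_sub_le (w + w') (w - p)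
  rw [show w + w' - (w - p) - (w' - q) = p + q by abel] at h₁
  linarith [hw.1, hw'.2]

theorem mem_lens_or_neg_mem_lens (hs : 2 * ‖p - q‖ ≤ ‖p + q‖) {w : E} (hw : w ∈ W 0) :
    w ∈ lens p q ∨ -w ∈ lens p q := by
  obtain ⟨hwp, hwq⟩ := hw
  have h₁ := norm_sub_le (w + q) (w - p)
  have h₂ := norm_sub_le (w + p) (w - q)
  rw [show w + q - (w - p) = p + q by abel] at h₁
  rw [show w + p - (w - q) = p + q by abel] at h₂
  have h₃ := norm_sub_le_norm_sub_add_norm_sub w p q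
  have h₄ := norm_sub_le_norm_sub_add_norm_sub w q p
  rw [norm_sub_rev q p] at h₄
  simp only [lens, Set.mem_ofPred_eq, ← neg_add', norm_neg]
  rcases min_le_iff.mp hwp with hp | hp <;> rcases min_le_iff.mp hwq with hq | hq
  -- in the two mixed cases `‖p + q‖ ≤ ‖p - q‖`, which forces `p = q`
  · exact .inl ⟨hp, hq⟩
  · exact .inl ⟨hp, by linarith⟩
  · exact .inl ⟨by linarith, hq⟩
  · exact .inr ⟨hp, hq⟩

theorem forall_phaseDist_le_of_forall_mem_lens (hs : 2 * ‖p - q‖ ≤ ‖p + q‖) {u : E} {r : ℝ}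
    {n : ℕ} (h : ∀ w ∈ W n, w ∈ lens p q → phaseDist u w ≤ r) :
    ∀ w ∈ W n, phaseDist u w ≤ r := by
  intro w hw
  rcases mem_lens_or_neg_mem_lens hs (midpointSets_antitone (Nat.zero_le n) hw) with hl | hl
  · exact h w hw hl
  · rw [← phaseDist_neg_right]
    exact h _ (neg_mem_midpointSets_phaseDist hw) hl

theorem phaseDist_le_of_mem_midpointSets (hs : 2 * ‖p - q‖ ≤ ‖p + q‖) {n : ℕ} {w w' : E}
    (hw : w ∈ W n) (hw' : w' ∈ W n) : phaseDist w w' ≤ ‖p - q‖ / 2 ^ n := by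
  cases n with
  | succ n => exact hw.2 w' hw'.1
  | zero =>
    rw [pow_zero, div_one]
    refine forall_phaseDist_le_of_forall_mem_lens hs (fun v _ hvl => ?_) w' hw'
    rw [phaseDist_comm]
    refine forall_phaseDist_le_of_forall_mem_lens hs (fun u _ hul => ?_) w hw
    exact (phaseDist_le_norm_sub _ _).trans (norm_sub_le_of_mem_lens hvl hul)

theorem add_sub_mem_midpointSets (hs : 2 * ‖p - q‖ ≤ ‖p + q‖) {n : ℕ} {w : E}
    (hw : w ∈ W n) (hwl : w ∈ lens p q) : p + q - w ∈ W n := by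
  induction n generalizing w with
  | zero => exact lens_subset_midpointSets_zero (add_sub_mem_lens hwl)
  | succ n ih =>
    refine ⟨ih hw.1 hwl, forall_phaseDist_le_of_forall_mem_lens hs fun w' hw' hw'l => ?_⟩
    calc phaseDist (p + q - w) w' ≤ ‖p + q - w - w'‖ := phaseDist_le_norm_sub _ _
      _ = ‖w - (p + q - w')‖ := by rw [← norm_neg]; congr 1; abel
      _ = phaseDist w (p + q - w') :=
        (phaseDist_eq_norm_sub_of_mem_lens hs hwl (add_sub_mem_lens hw'l)).symm
      _ ≤ ‖p - q‖ / 2 ^ (n + 1) := hw.2 _ (ih hw' hw'l)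

variable [NormedSpace ℝ E]

theorem norm_one_half_smul (v : E) : ‖(1 / 2 : ℝ) • v‖ = ‖v‖ / 2 := by
  rw [norm_smul, Real.norm_of_nonneg (by norm_num), one_div_mul_eq_div]

theorem half_smul_add_mem_lens : (1 / 2 : ℝ) • (p + q) ∈ lens p q := by
  refine ⟨?_, ?_⟩
  · rw [show (1 / 2 : ℝ) • (p + q) - p = (1 / 2 : ℝ) • (q - p) by module, norm_one_half_smul,
      norm_sub_rev]
  · rw [show (1 / 2 : ℝ) • (p + q) - q = (1 / 2 : ℝ) • (p - q) by module, norm_one_half_smul]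

theorem half_smul_add_mem_midpointSets (hs : 2 * ‖p - q‖ ≤ ‖p + q‖) (n : ℕ) :
    (1 / 2 : ℝ) • (p + q) ∈ W n := by
  induction n with
  | zero => exact lens_subset_midpointSets_zero half_smul_add_mem_lens
  | succ n ih =>
    refine ⟨ih, forall_phaseDist_le_of_forall_mem_lens hs fun w hw hwl => ?_⟩
    calc phaseDist ((1 / 2 : ℝ) • (p + q)) w ≤ ‖(1 / 2 : ℝ) • (p + q) - w‖ :=
          phaseDist_le_norm_sub _ _
      _ = ‖p + q - w - w‖ / 2 := by
        rw [show (1 / 2 : ℝ) • (p + q) - w = (1 / 2 : ℝ) • (p + q - w - w) by module,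
          norm_one_half_smul]
      _ = phaseDist (p + q - w) w / 2 := by
        rw [phaseDist_eq_norm_sub_of_mem_lens hs (add_sub_mem_lens hwl) hwl]
      _ ≤ ‖p - q‖ / 2 ^ n / 2 := by
        gcongr
        exact phaseDist_le_of_mem_midpointSets hs (add_sub_mem_midpointSets hs hw hwl) hw
      _ = ‖p - q‖ / 2 ^ (n + 1) := by rw [pow_succ, div_div]

end Lens

section PhaseIsometry

variable {X Y : Type*} [NormedAddCommGroup X] [NormedAddCommGroup Y] {f : X → Y}

theorem PhaseIsometry.phaseDist_eq (hf : PhaseIsometry f) (u v : X) :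
    phaseDist (f u) (f v) = phaseDist u v := by
  rcases Set.pair_eq_pair_iff.mp (hf u v) with ⟨h₁, h₂⟩ | ⟨h₁, h₂⟩
  · rw [phaseDist, phaseDist, h₁, h₂]
  · rw [phaseDist, phaseDist, h₁, h₂, min_comm]

theorem PhaseIsometry.exists_norm_add_eq_norm_sub_eq (hf : PhaseIsometry f) (x y : X) :
    ∃ z, (z = f y ∨ z = -f y) ∧ ‖f x + z‖ = ‖x + y‖ ∧ ‖f x - z‖ = ‖x - y‖ := by
  rcases Set.pair_eq_pair_iff.mp (hf x y) with ⟨h₁, h₂⟩ | ⟨h₁, h₂⟩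
  · exact ⟨f y, .inl rfl, h₁, h₂⟩
  · exact ⟨-f y, .inr rfl, by rwa [← sub_eq_add_neg], by rwa [sub_neg_eq_add]⟩

end PhaseIsometry

theorem phase_isometry_midpoint_four_cases_general
    {X Y : Type*} [NormedAddCommGroup X] [NormedSpace ℝ X]
    [NormedAddCommGroup Y] [NormedSpace ℝ Y]
    (f : X → Y) (hsurj : Function.Surjective f) (hf : PhaseIsometry f)
    (x y : X) (h : ‖x + y‖ ≥ 2 * ‖x - y‖) :
    f (((1 : ℝ) / 2) • (x + y)) = ((1 : ℝ) / 2) • (f x + f y) ∨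
    f (((1 : ℝ) / 2) • (x + y)) = -(((1 : ℝ) / 2) • (f x + f y)) ∨
    f (((1 : ℝ) / 2) • (x + y)) = ((1 : ℝ) / 2) • (f x - f y) ∨
    f (((1 : ℝ) / 2) • (x + y)) = -(((1 : ℝ) / 2) • (f x - f y)) := by
  obtain ⟨z, hz, hz_add, hz_sub⟩ := hf.exists_norm_add_eq_norm_sub_eq x y
  have hρz : ∀ w, phaseDist (f w) z = phaseDist w y := by
    rcases hz with rfl | rfl <;> simp only [phaseDist_neg_right, hf.phaseDist_eq, implies_true]
  have hfm (n : ℕ) : f ((1 / 2 : ℝ) • (x + y)) ∈ midpointSets phaseDist (f x) z ‖x - y‖ n :=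
    (mem_midpointSets_iff_apply_mem hsurj hf.phaseDist_eq (hf.phaseDist_eq · x) hρz n _).1
      (half_smul_add_mem_midpointSets h n)
  have hm (n : ℕ) : (1 / 2 : ℝ) • (f x + z) ∈ midpointSets phaseDist (f x) z ‖x - y‖ n := by
    rw [← hz_sub]
    exact half_smul_add_mem_midpointSets (by rw [hz_sub, hz_add]; exact h) n
  rcases eq_or_eq_neg_of_phaseDist_nonpos (nonpos_of_forall_mem_midpointSets hfm hm)
    with he | he <;> rcases hz with rfl | rfl <;>
    simp only [he, ← sub_eq_add_neg, true_or, or_true]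

theorem phase_isometry_midpoint_four_cases
    {X Y : Type*} [NormedAddCommGroup X] [NormedSpace ℝ X]
    [NormedAddCommGroup Y] [NormedSpace ℝ Y]
    (f : X → Y) (hsurj : Function.Surjective f) (hf : PhaseIsometry f)
    (x y : X) (hx : x ≠ 0) (hy : y ≠ 0) (h : ‖x + y‖ ≥ 2 * ‖x - y‖) :
    f (((1 : ℝ) / 2) • (x + y)) = ((1 : ℝ) / 2) • (f x + f y) ∨
    f (((1 : ℝ) / 2) • (x + y)) = -(((1 : ℝ) / 2) • (f x + f y)) ∨
    f (((1 : ℝ) / 2) • (x + y)) = ((1 : ℝ) / 2) • (f x - f y) ∨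
    f (((1 : ℝ) / 2) • (x + y)) = -(((1 : ℝ) / 2) • (f x - f y)) :=
  phase_isometry_midpoint_four_cases_general f hsurj hf x y h
end

section
/- Let ℝ² be endowed with the supremum norm ‖(x,y)‖ = max{|x|, |y|}, and define f : ℝ → ℝ² by f(t) = (t, sin t). Then f satisfies {‖f(s)+f(t)‖, ‖f(s)−f(t)‖} = {|s+t|, |s−t|} for all s, t ∈ ℝ, but there is no linear isometry U : ℝ → ℝ² and no function σ : ℝ → {−1,1} such that f(t) = σ(t) • U(t) for all t ∈ ℝ. -/
/-!
Since `sin` is 1-Lipschitz, `|sin s ± sin t| ≤ |s ± t|`, so the first coordinate realises both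
sup-norms. A linear `U : ℝ → ℝ²` is `t ↦ t • U 1`, so `σ t • U t` would have second coordinate
`± t c`; matching `sin` at `π` forces `c = 0`, which contradicts `sin (π / 2) = 1`.
-/

open Real

lemma abs_sin_add_sin_le (a b : ℝ) : |sin a + sin b| ≤ |a + b| := by
  simpa [sin_neg, sub_eq_add_neg] using abs_sin_sub_sin_le a (-b)

lemma norm_add_graph_sin (s t : ℝ) : ‖((s, sin s) : ℝ × ℝ) + (t, sin t)‖ = |s + t| := by
  simp only [Prod.mk_add_mk, Prod.norm_def, norm_eq_abs]
  exact max_eq_left (abs_sin_add_sin_le s t)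

lemma norm_sub_graph_sin (s t : ℝ) : ‖((s, sin s) : ℝ × ℝ) - (t, sin t)‖ = |s - t| := by
  simp only [Prod.mk_sub_mk, Prod.norm_def, norm_eq_abs]
  exact max_eq_left (abs_sin_sub_sin_le s t)

lemma not_forall_sin_eq_mul_mul (c : ℝ) (σ : ℝ → ℝ) (hσ : ∀ t, σ t ≠ 0) :
    ¬ ∀ t, sin t = σ t * (t * c) := by
  intro h
  have hc : c = 0 := by
    have hπ := h π
    rw [sin_pi, eq_comm] at hπ
    simpa [hσ π, pi_ne_zero] using hπ
  simpa [hc] using h (π / 2)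

/-- The map `t ↦ (t, sin t)` into `ℝ × ℝ` with the supremum norm
(the product norm on `ℝ × ℝ` in Mathlib is `‖(x, y)‖ = max |x| |y|`)
is a phase-isometry which is not phase equivalent to a linear isometry:
surjectivity cannot be omitted in the main theorem. -/
theorem sin_example_phase_isometry_not_phase_equivalent :
    (∀ s t : ℝ,
      ({‖((s, Real.sin s) : ℝ × ℝ) + (t, Real.sin t)‖,
        ‖((s, Real.sin s) : ℝ × ℝ) - (t, Real.sin t)‖} : Set ℝ) = {|s + t|, |s - t|}) ∧
    ¬ ∃ U : ℝ →ₗᵢ[ℝ] ℝ × ℝ, ∃ σ : ℝ → ℝ, (∀ t : ℝ, σ t = 1 ∨ σ t = -1) ∧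
        ∀ t : ℝ, ((t, Real.sin t) : ℝ × ℝ) = σ t • U t := by
  refine ⟨fun s t => by rw [norm_add_graph_sin, norm_sub_graph_sin], ?_⟩
  rintro ⟨U, σ, hσ, hf⟩
  have hU : ∀ t : ℝ, U t = t • U 1 := fun t => by rw [← map_smul, smul_eq_mul, mul_one]
  refine not_forall_sin_eq_mul_mul (U 1).2 σ (fun t => by rcases hσ t with h | h <;> simp [h]) ?_
  intro t
  simpa [hU t] using congrArg Prod.snd (hf t)
end
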